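/- arXiv:2408.14160 — 3 statements merged into one kernel-verified Lean document; each statement's English description precedes it below -/
import Mathlib

section
/- If D is a derivation of a Lie algebra L and φ is a 1/2-derivation of L, then the commutator [D, φ] = D∘φ − φ∘D is again a 1/2-derivation of L. -/
/-- The commutator of a derivation and a 1/2-derivation is a 1/2-derivation. -/
theorem stmt5 (L : Type*) [LieRing L] [LieAlgebra ℂ L]
    (D φ : L →ₗ[ℂ] L)
    (hD : ∀ x y : L, D ⁅x, y⁆ = ⁅D x, y⁆ + ⁅x, D y⁆)
    (hφ : ∀ x y : L, φ ⁅x, y⁆ = (1/2 : ℂ) • (⁅φ x, y⁆ + ⁅x, φ y⁆)) :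
    ∀ x y : L, (D ∘ₗ φ - φ ∘ₗ D) ⁅x, y⁆ =
      (1/2 : ℂ) • (⁅(D ∘ₗ φ - φ ∘ₗ D) x, y⁆ + ⁅x, (D ∘ₗ φ - φ ∘ₗ D) y⁆) := by
  intro x y
  simp only [LinearMap.sub_apply, LinearMap.comp_apply, hφ, hD, map_smul, map_add,
    lie_smul, smul_lie, lie_add, add_lie, lie_sub, sub_lie, smul_add, smul_sub]
  module
end

section
/- Let Vir be the Virasoro algebra. Then every 1/2-derivation of Vir is a scalar multiple of the identity map. -/
/-! Write φ(Lₘ) = Σₖ aₘₖ Lₖ + dₘ C. Since C is central, so is φ(C), hence φ(C) is a multiple of C.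
The Lₖ-coordinates of φ[Lₘ, Lₙ] = ½([φLₘ, Lₙ] + [Lₘ, φLₙ]) give a linear relation among the aₘₖ;
for m = 0 it says that aₙⱼ depends only on j − n off the line j = 2n, and for n = −m it extends
this to that line. The C-coordinates, where the cocycle (m³ − m)/12 enters, then kill the
off-diagonal entries and all dₘ, and identify the coefficient of C in φ(C) with the common
diagonal value a₀₀. -/

/-- Index set for the basis of the Virasoro algebra. -/
inductive VirIdx : Type
  | l : ℤ → VirIdx
  | c : VirIdx

section

variable {K V : Type*} [Field K] [LieRing V] [LieAlgebra K V]

def IsHalfDerivation (φ : V →ₗ[K] V) : Prop :=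
  ∀ x y : V, φ ⁅x, y⁆ = (1 / 2 : K) • (⁅φ x, y⁆ + ⁅x, φ y⁆)

theorem IsHalfDerivation.lie_map_eq_zero_of_forall_lie_eq_zero [CharZero K] {φ : V →ₗ[K] V}
    (hφ : IsHalfDerivation φ) {z : V} (hz : ∀ y : V, ⁅z, y⁆ = 0) (y : V) : ⁅y, φ z⁆ = 0 := by
  have h := hφ z y
  rw [hz, map_zero, hz, add_zero, eq_comm, smul_eq_zero] at h
  rw [← lie_skew, h.resolve_left (by norm_num), neg_zero]

structure IsVirasoroBasis (b : Module.Basis VirIdx K V) : Prop where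
  lie_l_l : ∀ m n : ℤ, ⁅b (.l m), b (.l n)⁆ =
    ((n - m : ℤ) : K) • b (.l (m + n)) +
    (if m + n = 0 then (((m : K) ^ 3 - m) / 12) else 0) • b .c
  c_lie : ∀ x : V, ⁅b .c, x⁆ = 0

namespace IsVirasoroBasis

variable {b : Module.Basis VirIdx K V}

theorem lie_c (hb : IsVirasoroBasis b) (x : V) : ⁅x, b .c⁆ = 0 := by
  rw [← lie_skew, hb.c_lie, neg_zero]

theorem repr_lie_l_apply_l (hb : IsVirasoroBasis b) (m j : ℤ) (x : V) :
    b.repr ⁅b (.l m), x⁆ (.l j) = ((j - 2 * m : ℤ) : K) * b.repr x (.l (j - m)) := by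
  classical
  have hcomp : (b.coord (.l j)).comp (LieAlgebra.ad K V (b (.l m))) =
      ((j - 2 * m : ℤ) : K) • b.coord (.l (j - m)) := by
    refine b.ext fun i => ?_
    rcases i with k | _
    · simp only [LinearMap.comp_apply, LieAlgebra.ad_apply, hb.lie_l_l, map_add, map_smul,
        LinearMap.smul_apply, Module.Basis.coord_apply,
        Module.Basis.repr_self, Finsupp.single_apply, reduceCtorEq, VirIdx.l.injEq, if_false,
        smul_eq_mul, mul_zero, add_zero]
      by_cases hj : j = m + k
      · subst hj
        simp only [if_true, show m + k - m = k by ring]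
        push_cast; ring
      · simp [Ne.symm hj, show k ≠ j - m by omega]
    · simp [hb.lie_c]
  simpa using LinearMap.congr_fun hcomp x

theorem repr_lie_l_apply_c (hb : IsVirasoroBasis b) (m : ℤ) (x : V) :
    b.repr ⁅b (.l m), x⁆ .c = ((m : K) ^ 3 - m) / 12 * b.repr x (.l (-m)) := by
  classical
  have hcomp : (b.coord .c).comp (LieAlgebra.ad K V (b (.l m))) =
      (((m : K) ^ 3 - m) / 12) • b.coord (.l (-m)) := by
    refine b.ext fun i => ?_
    rcases i with k | _
    · simp only [LinearMap.comp_apply, LieAlgebra.ad_apply, hb.lie_l_l, map_add, map_smul,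
        LinearMap.smul_apply, Module.Basis.coord_apply,
        Module.Basis.repr_self, Finsupp.single_apply, reduceCtorEq, VirIdx.l.injEq, if_false,
        if_true, smul_eq_mul, mul_one, mul_zero, zero_add]
      by_cases hk : k = -m
      · simp [hk]
      · simp [hk, show m + k ≠ 0 by omega]
    · simp [hb.lie_c]
  simpa using LinearMap.congr_fun hcomp x

theorem repr_l_eq_zero_of_forall_lie_eq_zero (hb : IsVirasoroBasis b) {z : V}
    (hz : ∀ m : ℤ, ⁅b (.l m), z⁆ = 0) (k : ℤ) : b.repr z (.l k) = 0 := by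
  have h := hb.repr_lie_l_apply_l (k - 1) (2 * k - 1) z
  rw [hz, map_zero, Finsupp.zero_apply, show 2 * k - 1 - 2 * (k - 1) = 1 by ring,
    show 2 * k - 1 - (k - 1) = k by ring] at h
  simpa using h.symm

end IsVirasoroBasis

namespace IsHalfDerivation

variable [CharZero K] {b : Module.Basis VirIdx K V} {φ : V →ₗ[K] V}

theorem repr_map_c_l (hφ : IsHalfDerivation φ) (hb : IsVirasoroBasis b) (k : ℤ) :
    b.repr (φ (b .c)) (.l k) = 0 :=
  hb.repr_l_eq_zero_of_forall_lie_eq_zero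
    (fun _ => hφ.lie_map_eq_zero_of_forall_lie_eq_zero hb.c_lie _) k

theorem repr_map_l_add_l (hφ : IsHalfDerivation φ) (hb : IsVirasoroBasis b) (m n j : ℤ) :
    2 * ((n - m : ℤ) : K) * b.repr (φ (b (.l (m + n)))) (.l j) =
      ((2 * n - j : ℤ) : K) * b.repr (φ (b (.l m))) (.l (j - n)) +
      ((j - 2 * m : ℤ) : K) * b.repr (φ (b (.l n))) (.l (j - m)) := by
  have h := congrArg (fun v => b.repr v (.l j)) (hφ (b (.l m)) (b (.l n)))
  rw [← lie_skew (φ (b (.l m)))] at h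
  simp only [hb.lie_l_l, map_add, map_smul, map_neg, Finsupp.add_apply, Finsupp.smul_apply,
    Finsupp.neg_apply, smul_eq_mul, hb.repr_lie_l_apply_l, hφ.repr_map_c_l hb] at h
  push_cast at h ⊢
  linear_combination 2 * h

theorem repr_map_l_add_c (hφ : IsHalfDerivation φ) (hb : IsVirasoroBasis b) (m n : ℤ) :
    ((n - m : ℤ) : K) * b.repr (φ (b (.l (m + n)))) .c +
        (if m + n = 0 then ((m : K) ^ 3 - m) / 12 else 0) * b.repr (φ (b .c)) .c =
      1 / 2 * (((m : K) ^ 3 - m) / 12 * b.repr (φ (b (.l n))) (.l (-m)) -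
        ((n : K) ^ 3 - n) / 12 * b.repr (φ (b (.l m))) (.l (-n))) := by
  have h := congrArg (fun v => b.repr v .c) (hφ (b (.l m)) (b (.l n)))
  rw [← lie_skew (φ (b (.l m)))] at h
  simp only [hb.lie_l_l, map_add, map_smul, map_neg, Finsupp.add_apply, Finsupp.smul_apply,
    Finsupp.neg_apply, smul_eq_mul, hb.repr_lie_l_apply_c] at h
  linear_combination h

theorem repr_map_l_of_ne_two_mul (hφ : IsHalfDerivation φ) (hb : IsVirasoroBasis b) {n j : ℤ}
    (hj : j ≠ 2 * n) : b.repr (φ (b (.l n))) (.l j) = b.repr (φ (b (.l 0))) (.l (j - n)) := by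
  have h := hφ.repr_map_l_add_l hb 0 n j
  simp only [zero_add, sub_zero] at h
  have hne : ((2 * n - j : ℤ) : K) ≠ 0 := Int.cast_ne_zero.mpr (by omega)
  refine mul_left_cancel₀ hne ?_
  push_cast at h ⊢
  linear_combination h

theorem repr_map_l_two_mul (hφ : IsHalfDerivation φ) (hb : IsVirasoroBasis b) {k : ℤ}
    (hk : k ≠ 0) : b.repr (φ (b (.l k))) (.l (2 * k)) = b.repr (φ (b (.l 0))) (.l k) := by
  have h := hφ.repr_map_l_add_l hb k (-k) k
  rw [add_neg_cancel, show k - -k = 2 * k by ring, sub_self,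
    hφ.repr_map_l_of_ne_two_mul hb (j := 0) (by omega), show 0 - -k = k by ring] at h
  have hne : (k : K) ≠ 0 := Int.cast_ne_zero.mpr hk
  refine mul_left_cancel₀ hne ?_
  push_cast at h
  linear_combination h / 3

theorem repr_map_l_zero_l_eq_zero (hφ : IsHalfDerivation φ) (hb : IsVirasoroBasis b) {s : ℤ}
    (hs : s ≠ 0) : b.repr (φ (b (.l 0))) (.l s) = 0 := by
  have shift : ∀ n : ℤ, n ≠ s →
      b.repr (φ (b (.l n))) (.l (n + s)) = b.repr (φ (b (.l 0))) (.l s) := fun n hn => by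
    rw [hφ.repr_map_l_of_ne_two_mul hb (by omega : n + s ≠ 2 * n), add_sub_cancel_left]
  have h₁ := hφ.repr_map_l_add_c hb 0 (-s)
  have h₂ := hφ.repr_map_l_add_c hb (-3 * s) (2 * s)
  rw [zero_add, if_neg (neg_ne_zero.mpr hs), neg_neg] at h₁
  rw [show -3 * s + 2 * s = -s by ring, if_neg (neg_ne_zero.mpr hs),
    show -(-3 * s) = 2 * s + s by ring, show -(2 * s) = -3 * s + s by ring,
    shift (2 * s) (by omega), shift (-3 * s) (by omega)] at h₂
  -- eliminating the coefficient of `C` in `φ L₋ₛ` between the two central relations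
  have hcube : (s : K) ^ 3 * b.repr (φ (b (.l 0))) (.l s) = 0 := by
    push_cast at h₁ h₂
    linear_combination 4 * h₁ + 4 / 5 * h₂
  exact (mul_eq_zero.mp hcube).resolve_left (pow_ne_zero 3 (Int.cast_ne_zero.mpr hs))

theorem repr_map_l_of_ne (hφ : IsHalfDerivation φ) (hb : IsVirasoroBasis b) {n j : ℤ}
    (hj : j ≠ n) : b.repr (φ (b (.l n))) (.l j) = 0 := by
  by_cases h2n : j = 2 * n
  · have hn : n ≠ 0 := by omega
    rw [h2n, hφ.repr_map_l_two_mul hb hn, hφ.repr_map_l_zero_l_eq_zero hb hn]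
  · rw [hφ.repr_map_l_of_ne_two_mul hb h2n, hφ.repr_map_l_zero_l_eq_zero hb (by omega)]

theorem repr_map_l_self (hφ : IsHalfDerivation φ) (hb : IsVirasoroBasis b) (n : ℤ) :
    b.repr (φ (b (.l n))) (.l n) = b.repr (φ (b (.l 0))) (.l 0) := by
  rcases eq_or_ne n 0 with rfl | hn
  · rfl
  · rw [hφ.repr_map_l_of_ne_two_mul hb (by omega), sub_self]

theorem repr_map_l_c (hφ : IsHalfDerivation φ) (hb : IsVirasoroBasis b) (n : ℤ) :
    b.repr (φ (b (.l n))) .c = 0 := by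
  rcases eq_or_ne n 0 with rfl | hn
  · -- the cocycle vanishes at `m = ±1`
    have h := hφ.repr_map_l_add_c hb 1 (-1)
    norm_num at h
    exact h
  · have h := hφ.repr_map_l_add_c hb 0 n
    rw [zero_add, if_neg hn, hφ.repr_map_l_zero_l_eq_zero hb (neg_ne_zero.mpr hn)] at h
    have hn' : (n : K) ≠ 0 := Int.cast_ne_zero.mpr hn
    refine (mul_eq_zero.mp (?_ : (n : K) * _ = 0)).resolve_left hn'
    push_cast at h
    linear_combination h

theorem repr_map_c_c (hφ : IsHalfDerivation φ) (hb : IsVirasoroBasis b) :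
    b.repr (φ (b .c)) .c = b.repr (φ (b (.l 0))) (.l 0) := by
  have h := hφ.repr_map_l_add_c hb 2 (-2)
  rw [if_pos (by norm_num), hφ.repr_map_l_c hb, neg_neg, hφ.repr_map_l_self hb 2,
    hφ.repr_map_l_self hb (-2)] at h
  push_cast at h
  linear_combination 2 * h

theorem eq_smul_id (hφ : IsHalfDerivation φ) (hb : IsVirasoroBasis b) :
    φ = b.repr (φ (b (.l 0))) (.l 0) • LinearMap.id := by
  classical
  refine b.ext fun i => b.repr.injective <| Finsupp.ext fun j => ?_
  rcases i with n | _ <;> rcases j with k | _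
  · rcases eq_or_ne k n with rfl | hk
    · simp [hφ.repr_map_l_self hb]
    · simp [hφ.repr_map_l_of_ne hb hk, Ne.symm hk]
  · simp [hφ.repr_map_l_c hb]
  · simp [hφ.repr_map_c_l hb]
  · simp [hφ.repr_map_c_c hb]

end IsHalfDerivation

end

/-- Every 1/2-derivation of the Virasoro algebra is a scalar multiple of the
identity map. -/
theorem stmt10 (V : Type*) [LieRing V] [LieAlgebra ℂ V] (b : Module.Basis VirIdx ℂ V)
    (hLL : ∀ m n : ℤ, ⁅b (.l m), b (.l n)⁆ =
      ((n - m : ℤ) : ℂ) • b (.l (m + n)) +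
      (if m + n = 0 then (((m : ℂ) ^ 3 - m) / 12) else 0) • b .c)
    (hc : ∀ x : V, ⁅b .c, x⁆ = 0)
    (φ : V →ₗ[ℂ] V)
    (hφ : ∀ x y : V, φ ⁅x, y⁆ = (1/2 : ℂ) • (⁅φ x, y⁆ + ⁅x, φ y⁆)) :
    ∃ c : ℂ, φ = c • (LinearMap.id : V →ₗ[ℂ] V) :=
  ⟨_, IsHalfDerivation.eq_smul_id hφ ⟨hLL, hc⟩⟩
end

section
/- Verify the 1/2-derivation property directly: in L̃¹_{1,μ}, the linear map φ defined by φ(L_m) = α M_{m+t₀} + β Y_{m+t₀+1/2}, φ(Y_{m+1/2}) = β M_{m+t₀+1}, φ(M_m) = 0, φ(C_L) = 0 (for fixed α, β ∈ ℂ and t₀ ∈ ℤ) satisfies φ([x,y]) = (1/2)([φ(x),y] + [x,φ(y)]) for all x, y; in particular L̃¹_{1,μ} admits nontrivial 1/2-derivations. -/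
/-!
Both sides of the 1/2-derivation identity are bilinear in `(x, y)`, so it suffices to compare
them on pairs of basis vectors, where it reduces to identities between the structure constants.
The map `L_m ↦ M_m` (the case `α = 1`, `β = 0`, `t₀ = 0`) kills `M_0` but not `L_0`, so it is
not a multiple of the identity.
-/

/-- Index set for the basis of the original deformative Schrödinger-Virasoro
algebra L̃¹_{1,μ}: `l n ↦ L_n`, `m n ↦ M_n`, `y n ↦ Y_{n+1/2}`, `c ↦ C_L`. -/
inductive ODIdx : Type
  | l : ℤ → ODIdx
  | m : ℤ → ODIdx
  | y : ℤ → ODIdx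
  | c : ODIdx

section

variable {R L ι : Type*} [CommRing R] [LieRing L] [LieAlgebra R L]

def IsDeltaDerivation (δ : R) (φ : L →ₗ[R] L) : Prop :=
  ∀ x y : L, φ ⁅x, y⁆ = δ • (⁅φ x, y⁆ + ⁅x, φ y⁆)

theorem IsDeltaDerivation.of_basis (b : Module.Basis ι R L) {δ : R} {φ : L →ₗ[R] L}
    (h : ∀ i j, φ ⁅b i, b j⁆ = δ • (⁅φ (b i), b j⁆ + ⁅b i, φ (b j)⁆)) :
    IsDeltaDerivation δ φ := by
  let B : L →ₗ[R] L →ₗ[R] L := LinearMap.mk₂ R (fun x y => φ ⁅x, y⁆)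
    (by simp [add_lie]) (by simp) (by simp [lie_add]) (by simp)
  let B' : L →ₗ[R] L →ₗ[R] L := LinearMap.mk₂ R (fun x y => δ • (⁅φ x, y⁆ + ⁅x, φ y⁆))
    (by intros; simp only [map_add, add_lie, smul_add]; abel)
    (by intros; simp only [map_smul, smul_lie, ← smul_add, smul_comm δ])
    (by intros; simp only [map_add, lie_add, smul_add]; abel)
    (by intros; simp only [map_smul, lie_smul, ← smul_add, smul_comm δ])
  intro x y
  exact LinearMap.congr_fun₂ (LinearMap.ext_basis b b h : B = B') x y

theorem LinearMap.ne_smul_id_of_apply_eq_zero {M : Type*} [AddCommGroup M] [Module R M]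
    [IsDomain R] [Module.IsTorsionFree R M] {φ : M →ₗ[R] M} {v : M} (hv : v ≠ 0) (hφv : φ v = 0)
    (hφ : φ ≠ 0) (c : R) : φ ≠ c • LinearMap.id := by
  rintro rfl
  have hcv : c • v = 0 := hφv
  obtain rfl : c = 0 := (smul_eq_zero.mp hcv).resolve_right hv
  exact hφ (zero_smul R _)

end

-- `b` is a basis of `V` in which `V` has the brackets of `L̃¹_{1,μ}`.
structure IsDeformativeSVBasis {V : Type*} [LieRing V] [LieAlgebra ℂ V]
    (b : Module.Basis ODIdx ℂ V) (μ : ℂ) : Prop where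
  lie_l_l : ∀ m n : ℤ, ⁅b (.l m), b (.l n)⁆ =
    ((n - m : ℤ) : ℂ) • b (.l (m + n)) +
    (if m + n = 0 then (((m : ℂ) ^ 3 - m) / 12) else 0) • b .c
  lie_l_y : ∀ m n : ℤ, ⁅b (.l m), b (.y n)⁆ = ((n : ℂ) + 1/2 - (m : ℂ) + μ) • b (.y (m + n))
  lie_l_m : ∀ m n : ℤ, ⁅b (.l m), b (.m n)⁆ = ((n : ℂ) - (m : ℂ) + 2 * μ) • b (.m (m + n))
  lie_y_y : ∀ m n : ℤ, ⁅b (.y m), b (.y n)⁆ = ((n - m : ℤ) : ℂ) • b (.m (m + n + 1))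
  lie_m_m : ∀ m n : ℤ, ⁅b (.m m), b (.m n)⁆ = 0
  lie_m_y : ∀ m n : ℤ, ⁅b (.m m), b (.y n)⁆ = 0
  c_lie : ∀ x : V, ⁅b .c, x⁆ = 0

namespace IsDeformativeSVBasis

variable {V : Type*} [LieRing V] [LieAlgebra ℂ V] {b : Module.Basis ODIdx ℂ V} {μ : ℂ}

theorem lie_c (hb : IsDeformativeSVBasis b μ) (x : V) : ⁅x, b .c⁆ = 0 := by
  rw [← lie_skew, hb.c_lie, neg_zero]

theorem lie_y_l (hb : IsDeformativeSVBasis b μ) (m n : ℤ) :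
    ⁅b (.y n), b (.l m)⁆ = -(((n : ℂ) + 1/2 - (m : ℂ) + μ) • b (.y (m + n))) := by
  rw [← lie_skew, hb.lie_l_y]

theorem lie_m_l (hb : IsDeformativeSVBasis b μ) (m n : ℤ) :
    ⁅b (.m n), b (.l m)⁆ = -(((n : ℂ) - (m : ℂ) + 2 * μ) • b (.m (m + n))) := by
  rw [← lie_skew, hb.lie_l_m]

theorem lie_y_m (hb : IsDeformativeSVBasis b μ) (m n : ℤ) : ⁅b (.y n), b (.m m)⁆ = 0 := by
  rw [← lie_skew, hb.lie_m_y, neg_zero]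

theorem isDeltaDerivation_half (hb : IsDeformativeSVBasis b μ) {α β : ℂ} {t₀ : ℤ}
    {φ : V →ₗ[ℂ] V}
    (hφl : ∀ m : ℤ, φ (b (.l m)) = α • b (.m (m + t₀)) + β • b (.y (m + t₀)))
    (hφy : ∀ m : ℤ, φ (b (.y m)) = β • b (.m (m + t₀ + 1)))
    (hφm : ∀ m : ℤ, φ (b (.m m)) = 0) (hφc : φ (b .c) = 0) :
    IsDeltaDerivation (1/2 : ℂ) φ := by
  refine .of_basis b ?_
  rintro (m | m | m | _) (n | n | n | _) <;>
    simp only [hb.lie_l_l, hb.lie_l_y, hb.lie_l_m, hb.lie_y_y, hb.lie_m_m, hb.lie_m_y, hb.c_lie,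
      hb.lie_c, hb.lie_y_l, hb.lie_m_l, hb.lie_y_m, hφl, hφy, hφm, hφc,
      map_add, map_smul, map_neg, map_zero, smul_zero, add_zero, zero_add, lie_zero, zero_lie,
      smul_add, lie_smul, smul_lie, add_lie, lie_add] <;>
    -- `ring_nf` also normalizes the integer indices of the basis vectors, so `module` can match them
    push_cast <;> (try ring_nf) <;> module

end IsDeformativeSVBasis

/-- Direct verification: in L̃¹_{1,μ}, the linear map φ with
φ(L_m) = α M_{m+t₀} + β Y_{m+t₀+1/2}, φ(Y_{m+1/2}) = β M_{m+t₀+1},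
φ(M_m) = 0, φ(C_L) = 0 is a 1/2-derivation; in particular L̃¹_{1,μ} admits
nontrivial 1/2-derivations. -/
theorem stmt14 (V : Type*) [LieRing V] [LieAlgebra ℂ V] (b : Module.Basis ODIdx ℂ V)
    (μ : ℂ)
    (hLL : ∀ m n : ℤ, ⁅b (.l m), b (.l n)⁆ =
      ((n - m : ℤ) : ℂ) • b (.l (m + n)) +
      (if m + n = 0 then (((m : ℂ) ^ 3 - m) / 12) else 0) • b .c)
    (hLY : ∀ m n : ℤ, ⁅b (.l m), b (.y n)⁆ =
      ((n : ℂ) + 1/2 - (m : ℂ) + μ) • b (.y (m + n)))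
    (hLM : ∀ m n : ℤ, ⁅b (.l m), b (.m n)⁆ = ((n : ℂ) - (m : ℂ) + 2 * μ) • b (.m (m + n)))
    (hYY : ∀ m n : ℤ, ⁅b (.y m), b (.y n)⁆ = ((n - m : ℤ) : ℂ) • b (.m (m + n + 1)))
    (hMM : ∀ m n : ℤ, ⁅b (.m m), b (.m n)⁆ = 0)
    (hMY : ∀ m n : ℤ, ⁅b (.m m), b (.y n)⁆ = 0)
    (hc : ∀ x : V, ⁅b .c, x⁆ = 0)
    (α β : ℂ) (t₀ : ℤ) :
    (∀ φ : V →ₗ[ℂ] V,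
      (∀ m : ℤ, φ (b (.l m)) = α • b (.m (m + t₀)) + β • b (.y (m + t₀))) →
      (∀ m : ℤ, φ (b (.y m)) = β • b (.m (m + t₀ + 1))) →
      (∀ m : ℤ, φ (b (.m m)) = 0) →
      φ (b .c) = 0 →
      ∀ x y : V, φ ⁅x, y⁆ = (1/2 : ℂ) • (⁅φ x, y⁆ + ⁅x, φ y⁆)) ∧
    (∃ φ : V →ₗ[ℂ] V,
      (∀ x y : V, φ ⁅x, y⁆ = (1/2 : ℂ) • (⁅φ x, y⁆ + ⁅x, φ y⁆)) ∧
      ∀ c : ℂ, φ ≠ c • (LinearMap.id : V →ₗ[ℂ] V)) := by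
  have hb : IsDeformativeSVBasis b μ := ⟨hLL, hLY, hLM, hYY, hMM, hMY, hc⟩
  refine ⟨fun φ hφl hφy hφm hφc => hb.isDeltaDerivation_half hφl hφy hφm hφc, ?_⟩
  set φ : V →ₗ[ℂ] V := b.constr ℂ fun | .l m => b (.m m) | _ => 0
  have hφl (m : ℤ) : φ (b (.l m)) = b (.m m) := b.constr_basis ℂ _ _
  have hφy (m : ℤ) : φ (b (.y m)) = 0 := b.constr_basis ℂ _ _
  have hφm (m : ℤ) : φ (b (.m m)) = 0 := b.constr_basis ℂ _ _
  have hφc : φ (b .c) = 0 := b.constr_basis ℂ _ _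
  refine ⟨φ, hb.isDeltaDerivation_half (α := 1) (β := 0) (t₀ := 0) (by simp [hφl]) (by simp [hφy])
    hφm hφc, ?_⟩
  have hφ_ne : φ ≠ 0 := fun h => b.ne_zero (.m 0) (by rw [← hφl, h, LinearMap.zero_apply])
  exact LinearMap.ne_smul_id_of_apply_eq_zero (b.ne_zero (.m 0)) (hφm 0) hφ_ne
end
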